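/- Let u and v be non-isotropic cycles with ⟨u, v⟩ = 0. If m ∈ E lies in the zero set of v, then the conjugate point m' of m with respect to u also lies in the zero set of v. -/

import Mathlib

/-!
The zero set of `v` is the set of points whose zero circle is orthogonal to `v`, and the
reflection in `u` fixes every cycle orthogonal to `u`, so it preserves orthogonality to `v`.
-/

section

open LinearMap (BilinForm)

variable {k E : Type*} [Field k] [AddCommGroup E] [Module k E]

def cyclePairing (B : BilinForm k E) (p q : k × E × k) : k :=
  B p.2.1 q.2.1 - 2 * p.1 * q.2.2 - 2 * q.1 * p.2.2

def zeroCircle (B : BilinForm k E) (x : E) : k × E × k :=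
  (1, -((2 : k) • x), B x x)

namespace cyclePairing

variable (B : BilinForm k E)

lemma comm (hB : B.IsSymm) (p q : k × E × k) : cyclePairing B p q = cyclePairing B q p := by
  simp only [cyclePairing, hB.eq p.2.1 q.2.1]
  ring

lemma sub_right (p q r : k × E × k) :
    cyclePairing B p (q - r) = cyclePairing B p q - cyclePairing B p r := by
  simp only [cyclePairing, Prod.fst_sub, Prod.snd_sub, map_sub]
  ring

lemma smul_right (p q : k × E × k) (c : k) :
    cyclePairing B p (c • q) = c * cyclePairing B p q := by
  simp only [cyclePairing, Prod.smul_fst, Prod.smul_snd, map_smul, smul_eq_mul]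
  ring

lemma zeroCircle_right (v : k × E × k) (x : E) :
    cyclePairing B v (zeroCircle B x) = -2 * (v.1 * B x x + B v.2.1 x + v.2.2) := by
  simp only [cyclePairing, zeroCircle, map_neg, map_smul, smul_eq_mul]
  ring

lemma sub_smul_of_orthogonal {B : BilinForm k E} (hB : B.IsSymm) {u v : k × E × k}
    (huv : cyclePairing B u v = 0) (p : k × E × k) (c : k) :
    cyclePairing B v (p - c • u) = cyclePairing B v p := by
  rw [sub_right, smul_right, comm B hB v u, huv, mul_zero, sub_zero]

end cyclePairing

end

theorem stmt_15_general {k : Type*} [Field k] (hchar : (2 : k) ≠ 0)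
    {E : Type*} [AddCommGroup E] [Module k E]
    (B : LinearMap.BilinForm k E) (hB : B.IsSymm)
    (cyc : (k × E × k) → (k × E × k) → k)
    (hcyc : ∀ p q : k × E × k,
      cyc p q = B p.2.1 q.2.1 - 2 * p.1 * q.2.2 - 2 * q.1 * p.2.2)
    (u v : k × E × k)
    (horth : cyc u v = 0)
    (m m' : E)
    -- `m'` is the conjugate of `m` with respect to `u`:
    (hconj : ∃ lam : k, lam ≠ 0 ∧
      ((1 : k), -((2 : k) • m), B m m) -
          (2 * (cyc ((1 : k), -((2 : k) • m), B m m) u / cyc u u)) • u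
        = lam • ((1 : k), -((2 : k) • m'), B m' m'))
    (hm : v.1 * B m m + B v.2.1 m + v.2.2 = 0) :
    v.1 * B m' m' + B v.2.1 m' + v.2.2 = 0 := by
  obtain rfl : cyc = cyclePairing B := funext₂ hcyc
  obtain ⟨lam, hlam, heq⟩ := hconj
  have hpair := congrArg (cyclePairing B v) heq
  change cyclePairing B v (zeroCircle B m - _ • u) = cyclePairing B v (lam • zeroCircle B m')
    at hpair
  rw [cyclePairing.sub_smul_of_orthogonal hB horth, cyclePairing.smul_right,
    cyclePairing.zeroCircle_right, cyclePairing.zeroCircle_right, hm, mul_zero] at hpair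
  have h2 : (-2 : k) ≠ 0 := neg_ne_zero.mpr hchar
  exact (mul_eq_zero.mp ((mul_eq_zero.mp hpair.symm).resolve_left hlam)).resolve_left h2

/-- If `u` and `v` are non-isotropic cycles with `⟨u,v⟩ = 0` and `m` lies in the zero
set of `v`, then the conjugate point `m'` of `m` with respect to `u` also lies in the
zero set of `v`. -/
theorem stmt_15 {k : Type*} [Field k] (hchar : (2 : k) ≠ 0)
    {E : Type*} [AddCommGroup E] [Module k E]
    (B : LinearMap.BilinForm k E) (hB : B.IsSymm)
    (haniso : ∀ x : E, B x x = 0 → x = 0)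
    (cyc : (k × E × k) → (k × E × k) → k)
    (hcyc : ∀ p q : k × E × k,
      cyc p q = B p.2.1 q.2.1 - 2 * p.1 * q.2.2 - 2 * q.1 * p.2.2)
    (u v : k × E × k) (hu : cyc u u ≠ 0) (hv : cyc v v ≠ 0)
    (horth : cyc u v = 0)
    (m m' : E)
    -- `m'` is the conjugate of `m` with respect to `u`:
    (hconj : ∃ lam : k, lam ≠ 0 ∧
      ((1 : k), -((2 : k) • m), B m m) -
          (2 * (cyc ((1 : k), -((2 : k) • m), B m m) u / cyc u u)) • u
        = lam • ((1 : k), -((2 : k) • m'), B m' m'))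
    (hm : v.1 * B m m + B v.2.1 m + v.2.2 = 0) :
    v.1 * B m' m' + B v.2.1 m' + v.2.2 = 0 :=
  stmt_15_general hchar B hB cyc hcyc u v horth m m' hconj hm
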